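/- Let n = a + 1 ≥ 1 and consider the function vol(t) on [0,2] defined by vol(t) = H² + 3·H·K for t ∈ [0,1] and vol(t) = (2-t)·((t² - t + 1)·H² + 3t·H·K) for t ∈ [1,2], where H² and H·K are positive real constants. Then (1/(H² + 3·H·K)) · ∫₀² vol(t) dt = ((7/4)·H² + 5·H·K)/(H² + 3·H·K), and this quantity is strictly greater than 5/3. -/

import Mathlib

/-!
Split the integral at `t = 1`: the constant piece contributes `H² + 3 H·K`, and the cubic piece on
`[1, 2]` contributes `(3/4) H² + 2 H·K` by an explicit antiderivative. The resulting quotient exceeds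
`5/3` by `H² / (12 (H² + 3 H·K)) > 0`.
-/

open intervalIntegral Set
open scoped Interval

theorem integral_ite_le_eq_add {f g : ℝ → ℝ} {a b c : ℝ} (hac : a ≤ c) (hcb : c ≤ b)
    (hf : IntervalIntegrable f MeasureTheory.volume a c)
    (hg : IntervalIntegrable g MeasureTheory.volume c b) :
    ∫ t in a..b, (if t ≤ c then f t else g t) = (∫ t in a..c, f t) + ∫ t in c..b, g t := by
  have hleft : EqOn f (fun t => if t ≤ c then f t else g t) [[a, c]] := by
    intro t ht
    rw [uIcc_of_le hac] at ht
    simp [ht.2]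
  have hright : EqOn g (fun t => if t ≤ c then f t else g t) (uIoo c b) := by
    intro t ht
    rw [uIoo_of_le hcb] at ht
    simp [not_le.mpr ht.1]
  rw [← integral_add_adjacent_intervals (hf.congr (hleft.mono uIoc_subset_uIcc))
    (hg.congr_uIoo hright), integral_congr hleft.symm, integral_congr_uIoo hright.symm]

theorem hasDerivAt_vol_antideriv (p q t : ℝ) :
    HasDerivAt (fun t => (-t ^ 4 / 4 + t ^ 3 - 3 / 2 * t ^ 2 + 2 * t) * p + (3 * t ^ 2 - t ^ 3) * q)
      ((2 - t) * ((t ^ 2 - t + 1) * p + 3 * t * q)) t := by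
  have hP := (((hasDerivAt_pow 4 t).neg.div_const 4).add (hasDerivAt_pow 3 t)).sub
    ((hasDerivAt_pow 2 t).const_mul (3 / 2)) |>.add ((hasDerivAt_id t).const_mul 2)
  have hQ := ((hasDerivAt_pow 2 t).const_mul 3).sub (hasDerivAt_pow 3 t)
  refine ((hP.mul_const p).add (hQ.mul_const q)).congr_deriv ?_
  norm_num
  ring

theorem integral_vol_one_two (p q : ℝ) :
    ∫ t in (1 : ℝ)..2, (2 - t) * ((t ^ 2 - t + 1) * p + 3 * t * q) = 3 / 4 * p + 2 * q := by
  rw [integral_eq_sub_of_hasDerivAt (fun t _ => hasDerivAt_vol_antideriv p q t)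
    (Continuous.intervalIntegrable (by fun_prop) _ _)]
  norm_num
  ring

/-- The computation of `S_X(Y)` in Example 3.6: with `H2 = H²`, `HK = H·(-K_S)` positive,
the normalized integral of the piecewise volume function equals
`((7/4)H² + 5H·(-K_S))/(H² + 3H·(-K_S)) > 5/3`. -/
theorem stmt_4 (H2 HK : ℝ) (hH2 : 0 < H2) (hHK : 0 < HK) :
    (1 / (H2 + 3 * HK)) *
        (∫ t in (0:ℝ)..2,
          if t ≤ 1 then H2 + 3 * HK
          else (2 - t) * ((t ^ 2 - t + 1) * H2 + 3 * t * HK)) =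
      ((7 / 4) * H2 + 5 * HK) / (H2 + 3 * HK) ∧
    (5 : ℝ) / 3 < ((7 / 4) * H2 + 5 * HK) / (H2 + 3 * HK) := by
  have hden : 0 < H2 + 3 * HK := by positivity
  constructor
  · rw [integral_ite_le_eq_add zero_le_one one_le_two intervalIntegrable_const
      (Continuous.intervalIntegrable (by fun_prop) _ _), integral_vol_one_two,
      intervalIntegral.integral_const]
    field_simp
    ring
  · rw [lt_div_iff₀ hden]
    linarith
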